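/- Suppose h(x, X) = vᵀx + h'(X) for a fixed vector v ∈ ℝⁿ and a random variable h'(X). Let 𝔛(c) := { x ∈ 𝔅 | vᵀx + h'(μ̃) ≥ c } for a compact convex set 𝔅 and constant c, and let 𝔛^VaR(β,γ) := { x ∈ 𝔅 | VaR_β(−h(x,X)) ≤ γ }. Let x* be a minimizer of vᵀx over 𝔛(c), assumed nonempty. Then 𝔛(c) ⊆ 𝔛^VaR(β,γ) if and only if VaR_β(−h(x*, X)) ≤ γ. -/
import Mathlib


open MeasureTheory

noncomputable def VaR {Ω : Type*} [MeasurableSpace Ω] (μ : Measure Ω) (β : ℝ)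
    (Y : Ω → ℝ) : ℝ :=
  sInf {d : ℝ | ENNReal.ofReal β ≤ μ {ω | Y ω ≤ d}}

lemma VaR_set_nonempty {Ω : Type*} [MeasurableSpace Ω] (μ : Measure Ω)
    [IsProbabilityMeasure μ] {β : ℝ} (hβ : β < 1) (Y : Ω → ℝ) :
    {d : ℝ | ENNReal.ofReal β ≤ μ {ω | Y ω ≤ d}}.Nonempty := by
  have hmono : Monotone (fun n : ℕ => {ω | Y ω ≤ (n : ℝ)}) := by
    intro a b hab ω h
    simp only [Set.mem_setOf_eq] at h ⊢
    exact le_trans h (Nat.cast_le.mpr hab)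
  have hun : (⋃ n : ℕ, {ω | Y ω ≤ (n : ℝ)}) = Set.univ := by
    ext ω; simp only [Set.mem_iUnion, Set.mem_univ, iff_true, Set.mem_setOf_eq]
    exact exists_nat_ge (Y ω)
  have htend := tendsto_measure_iUnion_atTop (μ := μ) hmono
  rw [hun, measure_univ] at htend
  have hlt : ENNReal.ofReal β < 1 := ENNReal.ofReal_lt_one.mpr hβ
  obtain ⟨n, hn⟩ := (htend.eventually (eventually_ge_nhds hlt)).exists
  exact ⟨(n : ℝ), hn⟩

lemma VaR_set_bddBelow {Ω : Type*} [MeasurableSpace Ω] (μ : Measure Ω)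
    [IsProbabilityMeasure μ] {β : ℝ} (hβ : 0 < β) (Y : Ω → ℝ) (hY : Measurable Y) :
    BddBelow {d : ℝ | ENNReal.ofReal β ≤ μ {ω | Y ω ≤ d}} := by
  have hanti : Antitone (fun n : ℕ => Y ⁻¹' Set.Iic (-(n : ℝ))) := by
    intro a b hab ω h
    simp only [Set.mem_preimage, Set.mem_Iic] at h ⊢
    exact le_trans h (by exact neg_le_neg (Nat.cast_le.mpr hab))
  have hin : (⋂ n : ℕ, Y ⁻¹' Set.Iic (-(n : ℝ))) = ∅ := by
    ext ω
    simp only [Set.mem_iInter, Set.mem_empty_iff_false, iff_false, Set.mem_preimage,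
      Set.mem_Iic, not_forall, not_le]
    obtain ⟨n, hn⟩ := exists_nat_gt (-Y ω)
    exact ⟨n, by linarith⟩
  have htend := tendsto_measure_iInter_atTop (μ := μ)
    (fun n => (hY measurableSet_Iic).nullMeasurableSet) hanti ⟨0, measure_ne_top μ _⟩
  rw [hin, measure_empty] at htend
  have hpos : (0 : ENNReal) < ENNReal.ofReal β := ENNReal.ofReal_pos.mpr hβ
  obtain ⟨n, hn⟩ := (htend.eventually (eventually_lt_nhds hpos)).exists
  refine ⟨-(n : ℝ), fun d hd => ?_⟩
  by_contra hcon
  push_neg at hcon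
  have : μ {ω | Y ω ≤ d} ≤ μ (Y ⁻¹' Set.Iic (-(n : ℝ))) :=
    measure_mono (fun ω h => le_trans h hcon.le)
  exact absurd (le_trans hd this) (not_le.mpr hn)

lemma VaR_add_const {Ω : Type*} [MeasurableSpace Ω] (μ : Measure Ω)
    [IsProbabilityMeasure μ] {β : ℝ} (hβ : β ∈ Set.Ioo (0:ℝ) 1)
    (Y : Ω → ℝ) (hY : Measurable Y) (t : ℝ) :
    VaR μ β (fun ω => Y ω + t) = VaR μ β Y + t := by
  have key : ∀ d : ℝ, {ω | Y ω + t ≤ d} = {ω | Y ω ≤ d - t} := by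
    intro d; ext ω; simp only [Set.mem_setOf_eq, le_sub_iff_add_le]
  have hset : {d : ℝ | ENNReal.ofReal β ≤ μ {ω | Y ω + t ≤ d}}
      = (fun d => d + t) '' {d : ℝ | ENNReal.ofReal β ≤ μ {ω | Y ω ≤ d}} := by
    ext d
    simp only [Set.mem_image, Set.mem_setOf_eq]
    constructor
    · intro h
      rw [key] at h
      exact ⟨d - t, h, by ring⟩
    · rintro ⟨e, he, rfl⟩
      rw [key]
      simpa using he
  have hne := VaR_set_nonempty μ hβ.2 Y
  have hbdd := VaR_set_bddBelow μ hβ.1 Y hY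
  unfold VaR
  rw [hset]
  have h2 := (OrderIso.addRight t).map_csInf hne hbdd
  simp only [OrderIso.addRight_apply] at h2
  rw [h2, iInf]
  congr 1
  exact Set.image_eq_range _ _

/-- Lemma 2 (VaR case): with `h(x, X) = vᵀx + h'(X)` (here `Z ω` plays the role of
`h'(X)` and `hm` the role of `h'(μ̃)`), the inclusion
`𝔛(c) ⊆ 𝔛^VaR(β,γ)` holds iff `VaR_β(−h(x*, X)) ≤ γ` where `x*` minimizes `vᵀx`
over the nonempty set `𝔛(c) = {x ∈ 𝔅 | vᵀx + h'(μ̃) ≥ c}`. -/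
theorem var_set_inclusion_iff {Ω : Type*} [MeasurableSpace Ω] (μ : Measure Ω)
    [IsProbabilityMeasure μ] {n : ℕ} (v : Fin n → ℝ) (Z : Ω → ℝ)
    (hZ : Measurable Z) (hm : ℝ) (B : Set (Fin n → ℝ)) (hBcomp : IsCompact B)
    (hBconv : Convex ℝ B) (c γ β : ℝ) (hβ : β ∈ Set.Ioo (0 : ℝ) 1)
    (Xc : Set (Fin n → ℝ)) (hXc : Xc = {x ∈ B | c ≤ (∑ i, v i * x i) + hm})
    (XVaR : Set (Fin n → ℝ))
    (hXVaR : XVaR = {x ∈ B | VaR μ β (fun ω => -((∑ i, v i * x i) + Z ω)) ≤ γ})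
    (xstar : Fin n → ℝ) (hxstar : xstar ∈ Xc)
    (hmin : ∀ x ∈ Xc, (∑ i, v i * xstar i) ≤ ∑ i, v i * x i) :
    Xc ⊆ XVaR ↔ VaR μ β (fun ω => -((∑ i, v i * xstar i) + Z ω)) ≤ γ := by
  have hshift : ∀ a : ℝ, VaR μ β (fun ω => -(a + Z ω))
      = VaR μ β (fun ω => -Z ω) + (-a) := by
    intro a
    have := VaR_add_const μ hβ (fun ω => -Z ω) hZ.neg (-a)
    simpa [neg_add, add_comm] using this
  constructor
  · intro hsub
    have := hsub hxstar
    rw [hXVaR] at this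
    exact this.2
  · intro hle x hx
    rw [hXVaR]
    rw [hXc] at hx
    refine ⟨hx.1, ?_⟩
    have h1 := hmin x (by rw [hXc]; exact hx)
    rw [hshift] at hle ⊢
    linarith
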